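/- For the 0-1-loss abstaining game with constraint set Z := {z ∈ [-1,1]ⁿ : (1/n)Fz ≥ b} nonempty, the minimax value with abstain cost c, V_c := min over g ∈ [-1,1]ⁿ and p ∈ [0,1]ⁿ of max over z ∈ Z of (1/n)Σⱼ [pⱼ·(1 − zⱼgⱼ)/2 + (1 − pⱼ)c], satisfies V_c = (1/2)·min over σ ≥ 0 of (−bᵀσ + (1/n)Σⱼ Ψ(xⱼᵀσ, c)) for every c ∈ (0, 1/2], where Ψ(m, c) = |m| + 2c(1 − |m|) for |m| ≤ 1 and |m| otherwise, and xⱼ is the j-th column of F. -/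

import Mathlib

/-!
For fixed `(g, p)` the adversary solves a linear program over the box `[-1, 1]ⁿ`. Separating the
compact convex image of the box from the positive orthant (Farkas) gives multipliers `σ ≥ 0`
whose ℓ¹ dual objective lies below any bound on the primal value. Since `c ≤ 1/2`,
`|m − p g| + p + 2c(1 − p) ≥ Ψ(m, c)` for all admissible `p, g`, which turns this into the
lower bound `V_c ≥ ½ · inf (dual objective)`. Conversely, for `σ ≥ 0` the predictor `gⱼ = sign mⱼ`,
`pⱼ = min(|mⱼ|, 1)` with `mⱼ = xⱼᵀσ` pays at most half the dual objective, by weak duality.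
-/

open Matrix Set Pointwise

/-- The abstaining potential well for the 0-1 loss. -/
noncomputable def PsiAbst (m c : ℝ) : ℝ :=
  if |m| ≤ 1 then |m| + 2 * c * (1 - |m|) else |m|

lemma mem_Icc_neg_one_one_iff {κ : Type*} {z : κ → ℝ} : z ∈ Icc (-1) 1 ↔ ∀ j, |z j| ≤ 1 := by
  simp only [mem_Icc, Pi.le_def, Pi.neg_apply, Pi.one_apply, abs_le, forall_and]

lemma abs_sign_le_one (x : ℝ) : |(SignType.sign x : ℝ)| ≤ 1 := by
  rcases lt_trichotomy x 0 with h | h | h <;> simp [h]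

section LinearProgramming

variable {ι κ : Type*} [Fintype ι] [Fintype κ]

lemma StrongDual.exists_apply_prod_eq (f : StrongDual ℝ ((ι → ℝ) × ℝ)) :
    ∃ σ : ι → ℝ, ∀ y r, f (y, r) = σ ⬝ᵥ y + r * f (0, 1) := by
  classical
  refine ⟨(dotProductEquiv ℝ ι).symm ((f : (ι → ℝ) × ℝ →ₗ[ℝ] ℝ).comp (LinearMap.inl ℝ _ ℝ)),
    fun y r => ?_⟩
  rw [← dotProductEquiv_apply_apply, LinearEquiv.apply_symm_apply]
  calc f (y, r) = f (y, 0) + f (r • (0, 1)) := by simp [← map_add]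
    _ = _ := by rw [map_smul, smul_eq_mul]; rfl

lemma exists_nonneg_forall_lagrangian_lt (A : Matrix ι κ ℝ) (b : ι → ℝ) (a : κ → ℝ) {t : ℝ}
    (hfeas : ∃ z, (∀ j, |z j| ≤ 1) ∧ b ≤ A *ᵥ z)
    (ht : ∀ z, (∀ j, |z j| ≤ 1) → b ≤ A *ᵥ z → a ⬝ᵥ z < t) :
    ∃ σ, 0 ≤ σ ∧ ∀ z, (∀ j, |z j| ≤ 1) → σ ⬝ᵥ (A *ᵥ z - b) + a ⬝ᵥ z < t := by
  classical
  obtain ⟨z₀, hz₀, hAz₀⟩ := hfeas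
  let ψ : (κ → ℝ) →ₗ[ℝ] (ι → ℝ) × ℝ :=
    { toFun := fun z => (A *ᵥ z, a ⬝ᵥ z)
      map_add' := fun z w => by simp [mulVec_add, dotProduct_add]
      map_smul' := fun s z => by simp [mulVec_smul, dotProduct_smul] }
  have hψ : ∀ z, ψ z - (b, t) = (A *ᵥ z - b, a ⬝ᵥ z - t) := fun _ => rfl
  let K := ψ '' Icc (-1) 1 + {-(b, t)}
  have hψK : ∀ z, (∀ j, |z j| ≤ 1) → ψ z - (b, t) ∈ K := fun z hz =>
    ⟨ψ z, mem_image_of_mem _ (mem_Icc_neg_one_one_iff.2 hz), _, rfl, (sub_eq_add_neg _ _).symm⟩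
  have hKconv : Convex ℝ K := ((convex_Icc _ _).linear_image ψ).add (convex_singleton _)
  have hKcomp : IsCompact K :=
    (isCompact_Icc.image ψ.continuous_of_finiteDimensional).add isCompact_singleton
  have hKdisj : Disjoint K (ProperCone.positive ℝ ((ι → ℝ) × ℝ)) := by
    rw [Set.disjoint_left]
    rintro _ ⟨_, ⟨z, hz, rfl⟩, _, rfl, rfl⟩ hpos
    obtain ⟨hb, ht'⟩ : 0 ≤ ψ z - (b, t) := by rw [sub_eq_add_neg]; exact hpos
    rw [hψ] at hb ht'
    exact (ht z (mem_Icc_neg_one_one_iff.1 hz) (sub_nonneg.1 hb)).not_ge (sub_nonneg.1 ht')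
  obtain ⟨f, hf_nonneg, hf_neg⟩ :=
    (ProperCone.positive ℝ _).hyperplane_separation hKconv hKcomp hKdisj
  obtain ⟨σ₀, hf⟩ := f.exists_apply_prod_eq
  set μ := f (0, 1)
  have hσ₀ : 0 ≤ σ₀ := fun i => by
    simpa [hf] using hf_nonneg (Pi.single i 1, 0) ⟨Pi.single_nonneg.2 zero_le_one, le_rfl⟩
  have hsep : ∀ z, (∀ j, |z j| ≤ 1) → σ₀ ⬝ᵥ (A *ᵥ z - b) + (a ⬝ᵥ z - t) * μ < 0 :=
    fun z hz => by simpa only [hψ, hf] using hf_neg _ (hψK z hz)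
  -- a vertical separating hyperplane would contradict feasibility of `z₀`
  have hμ : 0 < μ := by
    refine lt_of_le_of_ne (hf_nonneg (0, 1) ⟨le_rfl, zero_le_one⟩) fun hμ => ?_
    have h := hsep z₀ hz₀
    rw [← hμ, mul_zero, add_zero] at h
    exact h.not_ge (dotProduct_nonneg_of_nonneg hσ₀ (sub_nonneg.2 hAz₀))
  refine ⟨μ⁻¹ • σ₀, smul_nonneg (inv_nonneg.2 hμ.le) hσ₀, fun z hz => ?_⟩
  set X := σ₀ ⬝ᵥ (A *ᵥ z - b)
  have h : μ * (μ⁻¹ * X + a ⬝ᵥ z - t) < 0 := by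
    rw [mul_sub, mul_add, mul_inv_cancel_left₀ hμ.ne']
    linarith [hsep z hz]
  rw [smul_dotProduct, smul_eq_mul]
  linarith [neg_of_mul_neg_right h hμ.le]

theorem exists_nonneg_sum_abs_sub_dotProduct_lt (A : Matrix ι κ ℝ) (b : ι → ℝ) (a : κ → ℝ)
    {t : ℝ} (hfeas : ∃ z, (∀ j, |z j| ≤ 1) ∧ b ≤ A *ᵥ z)
    (ht : ∀ z, (∀ j, |z j| ≤ 1) → b ≤ A *ᵥ z → a ⬝ᵥ z < t) :
    ∃ σ, 0 ≤ σ ∧ ∑ j, |a j + (Aᵀ *ᵥ σ) j| - b ⬝ᵥ σ < t := by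
  obtain ⟨σ, hσ, hlag⟩ := exists_nonneg_forall_lagrangian_lt A b a hfeas ht
  refine ⟨σ, hσ, ?_⟩
  set zh : κ → ℝ := fun j => SignType.sign (a j + (Aᵀ *ᵥ σ) j)
  have h := hlag zh fun j => abs_sign_le_one _
  have hzh : ∑ j, |a j + (Aᵀ *ᵥ σ) j| = σ ⬝ᵥ (A *ᵥ zh) + a ⬝ᵥ zh := by
    rw [dotProduct_mulVec, ← mulVec_transpose, add_comm, ← add_dotProduct]
    exact Finset.sum_congr rfl fun j _ => (self_mul_sign _).symm
  rw [hzh, dotProduct_comm b]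
  rw [dotProduct_sub] at h
  linarith

end LinearProgramming

lemma psiAbst_le_abs_sub_mul_add {m c pr g : ℝ} (hc0 : 0 ≤ c) (hc : c ≤ 1 / 2)
    (hpr : pr ∈ Icc (0 : ℝ) 1) (hg : |g| ≤ 1) :
    PsiAbst m c ≤ |m - pr * g| + pr + 2 * c * (1 - pr) := by
  obtain ⟨hp0, hp1⟩ := hpr
  have hprg : |m| - pr ≤ |m - pr * g| := by
    have : |pr * g| ≤ pr := by rw [abs_mul, abs_of_nonneg hp0]; nlinarith [abs_nonneg g]
    linarith [abs_sub_abs_le_abs_sub m (pr * g)]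
  have hd := abs_nonneg (m - pr * g)
  unfold PsiAbst
  split_ifs with hm
  · rcases le_total pr |m| with h | h
    · nlinarith [mul_nonneg hc0 (sub_nonneg.2 h)]
    · nlinarith [mul_nonneg (sub_nonneg.2 h) (by linarith : (0 : ℝ) ≤ 1 - 2 * c)]
  · nlinarith

lemma abstain_term_le_psiAbst {m z : ℝ} (c : ℝ) (hz : |z| ≤ 1) :
    min |m| 1 * ((1 - z * SignType.sign m) / 2) + (1 - min |m| 1) * c
      ≤ (PsiAbst m c - z * m) / 2 := by
  have hzm : z * SignType.sign m * |m| = z * m := by rw [mul_assoc, sign_mul_abs]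
  unfold PsiAbst
  rcases le_or_gt |m| 1 with h | h
  · rw [if_pos h, min_eq_left h, ← hzm]
    linarith
  · rw [if_neg h.not_ge, min_eq_right h.le, ← hzm]
    have hzs : z * SignType.sign m ≤ 1 :=
      (abs_le.1 ((abs_mul _ _).trans_le (mul_le_one₀ hz (abs_nonneg _) (abs_sign_le_one m)))).2
    nlinarith

noncomputable section AbstainingGame

variable {p n : ℕ}

def labelSet (F : Matrix (Fin p) (Fin n) ℝ) (b : Fin p → ℝ) : Set (Fin n → ℝ) :=
  {z | (∀ j, |z j| ≤ 1) ∧ ∀ i, b i ≤ (1 / (n : ℝ)) * ∑ j, F i j * z j}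

def abstainLoss (c : ℝ) (g pr z : Fin n → ℝ) : ℝ :=
  (1 / (n : ℝ)) * ∑ j, (pr j * ((1 - z j * g j) / 2) + (1 - pr j) * c)

def worstCaseLoss (F : Matrix (Fin p) (Fin n) ℝ) (b : Fin p → ℝ) (c : ℝ) (g pr : Fin n → ℝ) :
    ℝ :=
  sSup {u : ℝ | ∃ z : Fin n → ℝ, (∀ j, |z j| ≤ 1) ∧
    (∀ i, b i ≤ (1 / (n : ℝ)) * ∑ j, F i j * z j) ∧ u = abstainLoss c g pr z}

def minimaxLoss (F : Matrix (Fin p) (Fin n) ℝ) (b : Fin p → ℝ) (c : ℝ) : ℝ :=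
  sInf {v : ℝ | ∃ g pr : Fin n → ℝ, (∀ j, |g j| ≤ 1) ∧ (∀ j, pr j ∈ Icc (0 : ℝ) 1) ∧
    v = worstCaseLoss F b c g pr}

def dualObjective (F : Matrix (Fin p) (Fin n) ℝ) (b : Fin p → ℝ) (c : ℝ) (σ : Fin p → ℝ) : ℝ :=
  -(∑ i, b i * σ i) + (1 / (n : ℝ)) * ∑ j, PsiAbst (∑ i, F i j * σ i) c

def dualValue (F : Matrix (Fin p) (Fin n) ℝ) (b : Fin p → ℝ) (c : ℝ) : ℝ :=
  sInf {v : ℝ | ∃ σ : Fin p → ℝ, (∀ i, 0 ≤ σ i) ∧ v = dualObjective F b c σ}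

variable {F : Matrix (Fin p) (Fin n) ℝ} {b : Fin p → ℝ} {c : ℝ}

lemma abstainLoss_mem_Icc {g pr z : Fin n → ℝ} (hc : c ∈ Icc (0 : ℝ) 1)
    (hg : ∀ j, |g j| ≤ 1) (hpr : ∀ j, pr j ∈ Icc (0 : ℝ) 1) (hz : ∀ j, |z j| ≤ 1) :
    abstainLoss c g pr z ∈ Icc (0 : ℝ) 1 := by
  have hterm : ∀ j, pr j * ((1 - z j * g j) / 2) + (1 - pr j) * c ∈ Icc (0 : ℝ) 1 := by
    intro j
    obtain ⟨hzg0, hzg1⟩ :=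
      abs_le.1 ((abs_mul _ _).trans_le (mul_le_one₀ (hz j) (abs_nonneg _) (hg j)))
    obtain ⟨hp0, hp1⟩ := hpr j
    obtain ⟨hc0, hc1⟩ := hc
    constructor <;> nlinarith [mul_nonneg hp0 (sub_nonneg.2 hzg1)]
  have hn : (0 : ℝ) ≤ 1 / n := by positivity
  refine ⟨mul_nonneg hn (Finset.sum_nonneg fun j _ => (hterm j).1), ?_⟩
  calc abstainLoss c g pr z ≤ 1 / n * ∑ _j : Fin n, (1 : ℝ) :=
        mul_le_mul_of_nonneg_left (Finset.sum_le_sum fun j _ => (hterm j).2) hn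
    _ ≤ 1 := by simpa using inv_mul_le_one_of_le₀ le_rfl (Nat.cast_nonneg (α := ℝ) n)

lemma abstainLoss_le_worstCaseLoss {g pr z : Fin n → ℝ} (hc : c ∈ Icc (0 : ℝ) 1)
    (hg : ∀ j, |g j| ≤ 1) (hpr : ∀ j, pr j ∈ Icc (0 : ℝ) 1) (hz : z ∈ labelSet F b) :
    abstainLoss c g pr z ≤ worstCaseLoss F b c g pr :=
  le_csSup ⟨1, by rintro _ ⟨z, hz, -, rfl⟩; exact (abstainLoss_mem_Icc hc hg hpr hz).2⟩
    ⟨z, hz.1, hz.2, rfl⟩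

lemma worstCaseLoss_le {g pr : Fin n → ℝ} {t : ℝ} (hne : (labelSet F b).Nonempty)
    (h : ∀ z ∈ labelSet F b, abstainLoss c g pr z ≤ t) : worstCaseLoss F b c g pr ≤ t := by
  obtain ⟨z₀, hz₀⟩ := hne
  exact csSup_le ⟨_, z₀, hz₀.1, hz₀.2, rfl⟩ fun _ ⟨z, hz, hzF, hu⟩ => hu ▸ h z ⟨hz, hzF⟩

lemma sum_mul_le_of_mem_labelSet {σ : Fin p → ℝ} {z : Fin n → ℝ}
    (hz : z ∈ labelSet F b) (hσ : ∀ i, 0 ≤ σ i) :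
    ∑ i, b i * σ i ≤ (1 / (n : ℝ)) * ∑ j, z j * ∑ i, F i j * σ i := by
  calc ∑ i, b i * σ i ≤ ∑ i, (1 / (n : ℝ)) * (∑ j, F i j * z j) * σ i :=
        Finset.sum_le_sum fun i _ => mul_le_mul_of_nonneg_right (hz.2 i) (hσ i)
    _ = _ := by
      simp_rw [Finset.mul_sum, Finset.sum_mul]
      rw [Finset.sum_comm]
      exact Finset.sum_congr rfl fun j _ => Finset.sum_congr rfl fun i _ => by ring

lemma exists_forall_abstainLoss_le_half_dualObjective {σ : Fin p → ℝ} (hσ : ∀ i, 0 ≤ σ i) :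
    ∃ g pr : Fin n → ℝ, (∀ j, |g j| ≤ 1) ∧ (∀ j, pr j ∈ Icc (0 : ℝ) 1) ∧
      ∀ z ∈ labelSet F b, abstainLoss c g pr z ≤ dualObjective F b c σ / 2 := by
  set m : Fin n → ℝ := fun j => ∑ i, F i j * σ i
  refine ⟨fun j => SignType.sign (m j), fun j => min |m j| 1, fun j => abs_sign_le_one _,
    fun j => ⟨le_min (abs_nonneg _) zero_le_one, min_le_right _ _⟩, fun z hz => ?_⟩
  have hweak := sum_mul_le_of_mem_labelSet hz hσ
  calc abstainLoss c (fun j => (SignType.sign (m j) : ℝ)) (fun j => min |m j| 1) z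
      ≤ 1 / (n : ℝ) * ∑ j, (PsiAbst (m j) c - z j * m j) / 2 :=
        mul_le_mul_of_nonneg_left
          (Finset.sum_le_sum fun j _ => abstain_term_le_psiAbst c (hz.1 j)) (by positivity)
    _ = (1 / (n : ℝ) * ∑ j, PsiAbst (m j) c - 1 / (n : ℝ) * ∑ j, z j * m j) / 2 := by
        rw [← Finset.sum_div, Finset.sum_sub_distrib]; ring
    _ ≤ dualObjective F b c σ / 2 := by unfold dualObjective; linarith

/-- The right-hand side is twice the ℓ¹ dual objective of the adversary's linear program against
`(g, pr)` (constraint matrix `F / n`, cost `-(pr ∘ g) / (2n)`), plus twice the label-independent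
part of the loss. -/
lemma dualObjective_two_smul_le {g pr : Fin n → ℝ} (hc0 : 0 ≤ c) (hc : c ≤ 1 / 2)
    (hg : ∀ j, |g j| ≤ 1) (hpr : ∀ j, pr j ∈ Icc (0 : ℝ) 1) (σ : Fin p → ℝ) :
    dualObjective F b c ((2 : ℝ) • σ) ≤
      2 * (∑ j, |1 / (n : ℝ) * (-(pr j * g j) / 2) + (((1 / (n : ℝ)) • F)ᵀ *ᵥ σ) j| - b ⬝ᵥ σ) +
        2 * (1 / (n : ℝ) * ∑ j, (pr j / 2 + (1 - pr j) * c)) := by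
  set m : Fin n → ℝ := fun j => ∑ i, F i j * σ i
  have hm : ∀ j, ∑ i, F i j * ((2 : ℝ) • σ) i = 2 * m j := fun j => by
    simp only [m, Finset.mul_sum, Pi.smul_apply, smul_eq_mul]
    exact Finset.sum_congr rfl fun i _ => by ring
  have hFσ : ∀ j, (((1 / (n : ℝ)) • F)ᵀ *ᵥ σ) j = 1 / (n : ℝ) * m j := fun j => by
    simp only [m, mulVec, dotProduct, transpose_apply, Matrix.smul_apply, smul_eq_mul,
      Finset.mul_sum, mul_assoc]
  have habs : 2 * ∑ j, |1 / (n : ℝ) * (-(pr j * g j) / 2) + (((1 / (n : ℝ)) • F)ᵀ *ᵥ σ) j| =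
      1 / (n : ℝ) * ∑ j, |2 * m j - pr j * g j| := by
    rw [Finset.mul_sum, Finset.mul_sum]
    refine Finset.sum_congr rfl fun j _ => ?_
    rw [hFσ, ← mul_add, abs_mul, abs_of_nonneg (by positivity : (0 : ℝ) ≤ 1 / n),
      show -(pr j * g j) / 2 + m j = (2 * m j - pr j * g j) / 2 by ring, abs_div, abs_two]
    ring
  calc dualObjective F b c ((2 : ℝ) • σ)
      = -(2 * b ⬝ᵥ σ) + 1 / (n : ℝ) * ∑ j, PsiAbst (2 * m j) c := by
        simp only [dualObjective, hm]
        change -(b ⬝ᵥ ((2 : ℝ) • σ)) + _ = _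
        rw [dotProduct_smul, smul_eq_mul]
    _ ≤ -(2 * b ⬝ᵥ σ) + 1 / (n : ℝ) *
          ∑ j, (|2 * m j - pr j * g j| + 2 * (pr j / 2 + (1 - pr j) * c)) := by
        gcongr with j
        linarith [psiAbst_le_abs_sub_mul_add (m := 2 * m j) hc0 hc (hpr j) (hg j)]
    _ = _ := by
        rw [Finset.sum_add_distrib, ← Finset.mul_sum, mul_add, ← habs]
        ring

lemma exists_dualObjective_lt {g pr : Fin n → ℝ} {t : ℝ} (hc0 : 0 ≤ c) (hc : c ≤ 1 / 2)
    (hg : ∀ j, |g j| ≤ 1) (hpr : ∀ j, pr j ∈ Icc (0 : ℝ) 1) (hne : (labelSet F b).Nonempty)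
    (ht : ∀ z ∈ labelSet F b, abstainLoss c g pr z < t) :
    ∃ σ : Fin p → ℝ, (∀ i, 0 ≤ σ i) ∧ dualObjective F b c σ < 2 * t := by
  set K := 1 / (n : ℝ) * ∑ j, (pr j / 2 + (1 - pr j) * c)
  set a : Fin n → ℝ := fun j => 1 / (n : ℝ) * (-(pr j * g j) / 2)
  have hmem : ∀ z, z ∈ labelSet F b ↔ (∀ j, |z j| ≤ 1) ∧ b ≤ ((1 / (n : ℝ)) • F) *ᵥ z :=
    fun z => by simp [labelSet, Pi.le_def, smul_mulVec, mulVec, dotProduct]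
  have hloss : ∀ z, abstainLoss c g pr z = K + a ⬝ᵥ z := fun z => by
    simp only [abstainLoss, K, a, dotProduct, Finset.mul_sum, ← Finset.sum_add_distrib]
    exact Finset.sum_congr rfl fun j _ => by ring
  obtain ⟨σ, hσ, hlt⟩ := exists_nonneg_sum_abs_sub_dotProduct_lt ((1 / (n : ℝ)) • F) b a
    (t := t - K) (hne.imp fun z hz => (hmem z).1 hz) fun z hz hAz => by
      linarith [hloss z, ht z ((hmem z).2 ⟨hz, hAz⟩)]
  refine ⟨(2 : ℝ) • σ, fun i => by simpa using hσ i, ?_⟩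
  linarith [dualObjective_two_smul_le hc0 hc hg hpr σ (F := F) (b := b)]

lemma bddBelow_dualObjective (hne : (labelSet F b).Nonempty) (hc : c ∈ Icc (0 : ℝ) 1) :
    BddBelow {v : ℝ | ∃ σ : Fin p → ℝ, (∀ i, 0 ≤ σ i) ∧ v = dualObjective F b c σ} := by
  obtain ⟨z₀, hz₀⟩ := hne
  refine ⟨0, ?_⟩
  rintro _ ⟨σ, hσ, rfl⟩
  obtain ⟨g, pr, hg, hpr, h⟩ := exists_forall_abstainLoss_le_half_dualObjective (c := c) hσ
  linarith [(abstainLoss_mem_Icc hc hg hpr hz₀.1).1, h z₀ hz₀]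

lemma minimaxLoss_le_half_dualValue (hne : (labelSet F b).Nonempty) (hc : c ∈ Icc (0 : ℝ) 1) :
    minimaxLoss F b c ≤ dualValue F b c / 2 := by
  obtain ⟨z₀, hz₀⟩ := hne
  have hbdd : BddBelow {v : ℝ | ∃ g pr : Fin n → ℝ, (∀ j, |g j| ≤ 1) ∧
      (∀ j, pr j ∈ Icc (0 : ℝ) 1) ∧ v = worstCaseLoss F b c g pr} := by
    refine ⟨0, ?_⟩
    rintro _ ⟨g, pr, hg, hpr, rfl⟩
    exact (abstainLoss_mem_Icc hc hg hpr hz₀.1).1.trans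
      (abstainLoss_le_worstCaseLoss hc hg hpr hz₀)
  suffices 2 * minimaxLoss F b c ≤ dualValue F b c by linarith
  refine le_csInf ⟨_, 0, fun _ => le_rfl, rfl⟩ ?_
  rintro _ ⟨σ, hσ, rfl⟩
  obtain ⟨g, pr, hg, hpr, h⟩ := exists_forall_abstainLoss_le_half_dualObjective (c := c) hσ
  have hmin : minimaxLoss F b c ≤ worstCaseLoss F b c g pr :=
    csInf_le hbdd ⟨g, pr, hg, hpr, rfl⟩
  linarith [worstCaseLoss_le ⟨z₀, hz₀⟩ h]

lemma half_dualValue_le_minimaxLoss (hne : (labelSet F b).Nonempty) (hc0 : 0 ≤ c)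
    (hc : c ≤ 1 / 2) : dualValue F b c / 2 ≤ minimaxLoss F b c := by
  have hc' : c ∈ Icc (0 : ℝ) 1 := ⟨hc0, by linarith⟩
  refine le_csInf ⟨_, 0, 0, fun _ => by simp, fun _ => by simp, rfl⟩ ?_
  rintro _ ⟨g, pr, hg, hpr, rfl⟩
  refine le_of_forall_gt_imp_ge_of_dense fun t ht => ?_
  obtain ⟨σ, hσ, hlt⟩ := exists_dualObjective_lt hc0 hc hg hpr hne
    fun z hz => (abstainLoss_le_worstCaseLoss hc' hg hpr hz).trans_lt ht
  have hdual : dualValue F b c ≤ dualObjective F b c σ :=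
    csInf_le (bddBelow_dualObjective hne hc') ⟨σ, hσ, rfl⟩
  linarith

end AbstainingGame

theorem stmt19_general (p n : ℕ) (F : Matrix (Fin p) (Fin n) ℝ) (b : Fin p → ℝ)
    (hne : ∃ z : Fin n → ℝ, (∀ j, |z j| ≤ 1) ∧
      ∀ i, b i ≤ (1 / (n : ℝ)) * ∑ j, F i j * z j)
    (c : ℝ) (hc1 : 0 < c) (hc2 : c ≤ 1 / 2) :
    sInf {v : ℝ | ∃ g pr : Fin n → ℝ, (∀ j, |g j| ≤ 1) ∧ (∀ j, pr j ∈ Set.Icc (0 : ℝ) 1) ∧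
        v = sSup {u : ℝ | ∃ z : Fin n → ℝ, (∀ j, |z j| ≤ 1) ∧
            (∀ i, b i ≤ (1 / (n : ℝ)) * ∑ j, F i j * z j) ∧
            u = (1 / (n : ℝ)) *
              ∑ j, (pr j * ((1 - z j * g j) / 2) + (1 - pr j) * c)}} =
    (1 / 2) * sInf {v : ℝ | ∃ σ : Fin p → ℝ, (∀ i, 0 ≤ σ i) ∧
        v = -(∑ i, b i * σ i) + (1 / (n : ℝ)) * ∑ j, PsiAbst (∑ i, F i j * σ i) c} := by
  change minimaxLoss F b c = 1 / 2 * dualValue F b c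
  have hc : c ∈ Icc (0 : ℝ) 1 := ⟨hc1.le, by linarith⟩
  linarith [minimaxLoss_le_half_dualValue hne hc, half_dualValue_le_minimaxLoss hne hc1.le hc2]

/-- Minimax value of the 0-1-loss abstaining game with abstain cost `c ∈ (0, 1/2]`:
`V_c = (1/2) min over σ ≥ 0 of (−bᵀσ + (1/n) Σⱼ Ψ(xⱼᵀσ, c))`. -/
theorem stmt19 (p n : ℕ) (hn : 0 < n) (F : Matrix (Fin p) (Fin n) ℝ)
    (hF : ∀ i j, |F i j| ≤ 1) (b : Fin p → ℝ) (hb : ∀ i, 0 < b i ∧ b i ≤ 1)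
    (hne : ∃ z : Fin n → ℝ, (∀ j, |z j| ≤ 1) ∧
      ∀ i, b i ≤ (1 / (n : ℝ)) * ∑ j, F i j * z j)
    (c : ℝ) (hc1 : 0 < c) (hc2 : c ≤ 1 / 2) :
    sInf {v : ℝ | ∃ g pr : Fin n → ℝ, (∀ j, |g j| ≤ 1) ∧ (∀ j, pr j ∈ Set.Icc (0 : ℝ) 1) ∧
        v = sSup {u : ℝ | ∃ z : Fin n → ℝ, (∀ j, |z j| ≤ 1) ∧
            (∀ i, b i ≤ (1 / (n : ℝ)) * ∑ j, F i j * z j) ∧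
            u = (1 / (n : ℝ)) *
              ∑ j, (pr j * ((1 - z j * g j) / 2) + (1 - pr j) * c)}} =
    (1 / 2) * sInf {v : ℝ | ∃ σ : Fin p → ℝ, (∀ i, 0 ≤ σ i) ∧
        v = -(∑ i, b i * σ i) + (1 / (n : ℝ)) * ∑ j, PsiAbst (∑ i, F i j * σ i) c} :=
  stmt19_general p n F b hne c hc1 hc2
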